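/- arXiv:1204.2933 — 2 statements merged into one kernel-verified Lean document; each statement's English description precedes it below -/
import Mathlib

section
/- Let 2 < d < 4 be a real number. There is no infinite strictly increasing sequence of positive real numbers a₁ < a₂ < a₃ < ⋯ satisfying a_{i+1} ≤ d·a_i − Σ_{j=1}^{i} a_j for every i ≥ 1. -/
theorem stmt_4 (d : ℝ) (hd1 : 2 < d) (hd2 : d < 4) :
    ¬ ∃ a : ℕ → ℝ, (∀ i, 0 < a i) ∧ StrictMono a ∧
      ∀ i : ℕ, a (i + 1) ≤ d * a i - ∑ j ∈ Finset.range (i + 1), a j := by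
  rintro ⟨a, hpos, _hmono, hrec⟩
  set S : ℕ → ℝ := fun i => ∑ j ∈ Finset.range (i + 1), a j with hS
  have hSpos : ∀ i, 0 < S i := fun i =>
    Finset.sum_pos (fun j _ => hpos j) ⟨0, Finset.mem_range.2 (Nat.succ_pos i)⟩
  have hSstep : ∀ i, S (i + 1) = S i + a (i + 1) := by
    intro i; simp [hS, Finset.sum_range_succ]
  have hSlt : ∀ i, S i < S (i + 1) := fun i => by
    rw [hSstep]; linarith [hpos (i + 1)]
  have hrec2 : ∀ i, S (i + 2) ≤ d * S (i + 1) - d * S i := by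
    intro i
    have h := hrec (i + 1)
    have h1 := hSstep (i + 1)
    have h2 := hSstep i
    have : S (i + 2) = S (i + 1) + a (i + 2) := hSstep (i + 1)
    nlinarith [h]
  set t : ℕ → ℝ := fun i => S (i + 1) / S i with ht
  have htgt : ∀ i, 1 < t i := fun i => (one_lt_div (hSpos i)).2 (hSlt i)
  have htpos : ∀ i, 0 < t i := fun i => lt_trans one_pos (htgt i)
  have htmul : ∀ i, t i * S i = S (i + 1) := fun i => div_mul_cancel₀ _ (hSpos i).ne'
  have hm : 0 < d - d ^ 2 / 4 := by nlinarith
  -- key: t(i+1) * t i ≤ d * t i - d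
  have key : ∀ i, t (i + 1) * t i ≤ d * t i - d := by
    intro i
    have h := hrec2 i
    have e : t (i + 1) * t i * S i = S (i + 2) := by
      rw [mul_assoc, htmul i, htmul (i + 1)]
    have e2 : (d * t i - d) * S i = d * S (i + 1) - d * S i := by
      rw [sub_mul, mul_assoc, htmul i]
    have : t (i + 1) * t i * S i ≤ (d * t i - d) * S i := by rw [e, e2]; exact h
    exact le_of_mul_le_mul_right this (hSpos i)
  -- quadratic fact: t(i+1) * t i ≤ t i ^ 2 - m
  have quad : ∀ i, t (i + 1) * t i ≤ t i ^ 2 - (d - d ^ 2 / 4) := by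
    intro i
    have := key i
    nlinarith [sq_nonneg (t i - d / 2)]
  have hdec : ∀ i, t (i + 1) < t i := by
    intro i
    have h := quad i
    have := htpos i
    nlinarith
  -- induction: t i * t 0 ≤ t 0 ^ 2 - i * m
  have hQ : ∀ i : ℕ, t i * t 0 ≤ t 0 ^ 2 - i * (d - d ^ 2 / 4) := by
    intro i
    induction i with
    | zero => simp [sq]
    | succ n ih =>
      have h1 := quad n
      have h2 := hdec n
      have h3 := htpos n
      have h4 : t n ≤ t 0 := by
        have := htgt n
        nlinarith [htpos 0]
      -- (t(n+1) - t n) * t 0 ≤ (t(n+1) - t n) * t n ≤ -m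
      have h5 : (t (n + 1) - t n) * t 0 ≤ (t (n + 1) - t n) * t n :=
        mul_le_mul_of_nonpos_left h4 (by linarith)
      have h6 : (t (n + 1) - t n) * t n ≤ -(d - d ^ 2 / 4) := by nlinarith
      push_cast
      nlinarith
  obtain ⟨N, hN⟩ := exists_nat_gt ((t 0 ^ 2 - t 0) / (d - d ^ 2 / 4))
  have h1 := hQ N
  have h2 := htgt N
  have h3 := htpos 0
  have : (t 0 ^ 2 - t 0) / (d - d ^ 2 / 4) * (d - d ^ 2 / 4) < N * (d - d ^ 2 / 4) :=
    by exact mul_lt_mul_of_pos_right hN hm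
  rw [div_mul_cancel₀ _ hm.ne'] at this
  nlinarith
end

section
/- Fix 0 < δ < 2. There is no infinite strictly increasing sequence of positive reals x₁ < x₂ < ⋯ satisfying x_{i+1} ≤ (4 − δ)·x_i − Σ_{j=1}^i x_j for all i ≥ 1. -/
theorem stmt_5 (δ : ℝ) (hδ1 : 0 < δ) (hδ2 : δ < 2) :
    ¬ ∃ x : ℕ → ℝ, (∀ i, 0 < x i) ∧ StrictMono x ∧
      ∀ i : ℕ, x (i + 1) ≤ (4 - δ) * x i - ∑ j ∈ Finset.range (i + 1), x j := by
  rintro ⟨x, hpos, hmono, hrec⟩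
  set d : ℝ := 4 - δ with hd
  have hd2 : 2 < d := by simp [hd]; linarith
  have hd4 : d < 4 := by simp [hd]; linarith
  set S : ℕ → ℝ := fun n => ∑ j ∈ Finset.range (n + 1), x j with hS
  have hSpos : ∀ n, 0 < S n := by
    intro n
    exact Finset.sum_pos (fun i _ => hpos i) ⟨0, by simp⟩
  have hSstep : ∀ n, S (n + 1) = S n + x (n + 1) := by
    intro n
    simp [hS, Finset.sum_range_succ]
  have hrec' : ∀ n, S (n + 2) ≤ d * S (n + 1) - d * S n := by
    intro n
    have h1 := hrec (n + 1)
    have h2 : x (n + 1) = S (n + 1) - S n := by rw [hSstep]; ring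
    have h3 : S (n + 2) = S (n + 1) + x (n + 2) := hSstep (n + 1)
    rw [h2] at h1
    have : S (n + 2) ≤ S (n + 1) + (d * (S (n + 1) - S n) - S (n + 1)) := by
      rw [h3]
      have := hrec (n + 1)
      simp only [hS] at *
      linarith [h1]
    nlinarith [this]
  set s : ℝ := Real.sqrt d with hs
  have hd0 : (0:ℝ) < d := by linarith
  have hs2 : s ^ 2 = d := Real.sq_sqrt hd0.le
  have hs0 : 0 < s := Real.sqrt_pos.mpr hd0
  have hslt2 : s < 2 := by nlinarith [hs2, hs0]
  set c : ℝ := 2 * s - d with hc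
  have hc0 : 0 < c := by
    have : c = s * (2 - s) := by rw [hc, ← hs2]; ring
    rw [this]
    exact mul_pos hs0 (by linarith)
  set r : ℕ → ℝ := fun n => S (n + 1) / S n with hr
  have hrpos : ∀ n, 0 < r n := fun n => div_pos (hSpos (n + 1)) (hSpos n)
  have key : ∀ n, r (n + 1) ≤ r n - c := by
    intro n
    have ha := hSpos n
    have hb := hSpos (n + 1)
    have he := hrec' n
    have hsq : 0 ≤ (S (n + 1) - s * S n) ^ 2 := sq_nonneg _
    have hrhs : r n - c = (S (n + 1) - c * S n) / S n := by
      rw [hr]; field_simp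
    show S (n + 2) / S (n + 1) ≤ r n - c
    rw [hrhs, div_le_div_iff₀ hb ha, hc, show d = s ^ 2 from hs2.symm]
    have he' : S (n + 2) ≤ s ^ 2 * S (n + 1) - s ^ 2 * S n := by rw [hs2]; exact he
    nlinarith [mul_le_mul_of_nonneg_right he' ha.le, hsq]
  have bound : ∀ n, r n ≤ r 0 - n * c := by
    intro n
    induction n with
    | zero => simp
    | succ k ih =>
      have := key k
      push_cast
      linarith
  obtain ⟨n, hn⟩ := Archimedean.arch (r 0) hc0
  have h1 := bound (n + 1)
  have h2 := hrpos (n + 1)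
  have : (n : ℝ) * c ≥ r 0 := by
    have := hn
    simpa [nsmul_eq_mul] using this
  push_cast at h1
  nlinarith [hc0]
end
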